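/- If u and v are words over {l, r} and u is a contiguous factor of v, then the associated permutation A(u) is a consecutive (value-window) subpermutation of A(v): A(u) is order-isomorphic to the restriction of A(v) to a contiguous interval of values of length |u|. -/
import Mathlib


/-- The permutation (as the list of values read by position, 0-indexed) associated
with a word over `{l, r}` (encoded `l = true`, `r = false`). -/
def assocPerm (w : List Bool) : List ℕ :=
  ((List.range w.length).filter fun i => w.getD i false) ++
    ((List.range w.length).filter fun i => !(w.getD i false))

/-- Two sequences are order-isomorphic. -/
def OrdIso (s t : List ℕ) : Prop :=
  s.length = t.length ∧ ∀ i j, i < s.length → j < s.length →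
    (s.getD i 0 < s.getD j 0 ↔ t.getD i 0 < t.getD j 0)

/-- The value-consecutive order on permutations: `s ≤ t` iff `s` is order-isomorphic
to the restriction of `t` to some contiguous window of values of length `|s|`. -/
def ConsLE (s t : List ℕ) : Prop :=
  ∃ k : ℕ, OrdIso s (t.filter fun v => decide (k ≤ v ∧ v < k + s.length))

lemma length_filter_not (l : List ℕ) (p : ℕ → Bool) :
    (l.filter p).length + (l.filter (fun x => !p x)).length = l.length := by
  induction l with
  | nil => simp
  | cons a t ih => by_cases h : p a <;> simp [List.filter_cons, h, ← ih] <;> omega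

lemma length_assocPerm (w : List Bool) : (assocPerm w).length = w.length := by
  unfold assocPerm
  rw [List.length_append, length_filter_not, List.length_range]

lemma key (k n r : ℕ) (P : ℕ → Bool) :
    (List.range (k + (n + r))).filter (fun i => decide (k ≤ i ∧ i < k + n) && P i)
      = ((List.range n).filter (fun j => P (k + j))).map (fun j => k + j) := by
  rw [List.range_add, List.range_add, List.map_append, List.map_map,
      List.filter_append, List.filter_append, List.filter_map, List.filter_map]
  have h1 : (List.range k).filter (fun i => decide (k ≤ i ∧ i < k + n) && P i) = [] := by
    rw [List.filter_eq_nil_iff]; intro a ha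
    simp only [List.mem_range] at ha
    simp only [Bool.and_eq_true, decide_eq_true_eq]
    omega
  have h3 : (List.range r).filter
      ((fun i => decide (k ≤ i ∧ i < k + n) && P i) ∘ ((fun x => k + x) ∘ fun x => n + x)) = [] := by
    rw [List.filter_eq_nil_iff]; intro a _
    simp only [Function.comp_apply, Bool.and_eq_true, decide_eq_true_eq]
    omega
  rw [h1, h3]
  simp only [List.map_nil, List.nil_append, List.append_nil]
  congr 1
  apply List.filter_congr
  intro j hj
  simp only [List.mem_range] at hj
  simp only [Function.comp_apply]
  have : decide (k ≤ k + j ∧ k + j < k + n) = true := by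
    simp only [decide_eq_true_eq]; omega
  rw [this, Bool.true_and]

lemma getD_map_add (s : List ℕ) (k i : ℕ) (h : i < s.length) :
    (s.map (fun j => k + j)).getD i 0 = k + s.getD i 0 := by
  rw [List.getD_eq_getElem?_getD, List.getD_eq_getElem?_getD, List.getElem?_map,
      List.getElem?_eq_getElem h]
  simp

lemma ordIso_map_add (s : List ℕ) (k : ℕ) : OrdIso s (s.map (fun j => k + j)) := by
  refine ⟨by simp, fun i j hi hj => ?_⟩
  rw [getD_map_add s k i hi, getD_map_add s k j hj]
  omega


/-- If `u` is a contiguous factor of `v` (words over `{l, r}`), then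
`assocPerm u` is a value-consecutive subpermutation of `assocPerm v`. -/
theorem stmt18 (u v : List Bool) (h : u <:+: v) :
    ConsLE (assocPerm u) (assocPerm v) := by
  obtain ⟨p, q, rfl⟩ := h
  refine ⟨p.length, ?_⟩
  have hget : ∀ j, j < u.length → (p ++ u ++ q).getD (p.length + j) false = u.getD j false := by
    intro j hj
    have h1 : p.length + j < (p ++ u).length := by simp; omega
    rw [List.getD_eq_getElem?_getD, List.getD_eq_getElem?_getD, List.getElem?_append,
        if_pos h1, List.getElem?_append, if_neg (by omega)]
    simp
  have hA : ((assocPerm (p ++ u ++ q)).filter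
        fun x => decide (p.length ≤ x ∧ x < p.length + (assocPerm u).length))
      = (assocPerm u).map (fun j => p.length + j) := by
    rw [length_assocPerm]
    unfold assocPerm
    have hlen : (p ++ u ++ q).length = p.length + (u.length + q.length) := by
      simp [Nat.add_assoc]
    rw [List.filter_append, List.filter_filter, List.filter_filter, hlen,
        key p.length u.length q.length (fun i => (p ++ u ++ q).getD i false),
        key p.length u.length q.length (fun i => !(p ++ u ++ q).getD i false),
        List.map_append]
    congr 2
    · apply List.filter_congr
      intro j hj
      simp only [List.mem_range] at hj
      rw [hget j hj]
    · apply List.filter_congr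
      intro j hj
      simp only [List.mem_range] at hj
      rw [hget j hj]
  rw [hA]
  exact ordIso_map_add _ _
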